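/- arXiv:1806.01645 — 8 statements merged into one kernel-verified Lean document; each statement's English description precedes it below -/
import Mathlib

section
/- For any point P in a triangle A₁A₂A₃ in the Euclidean plane, the sum of distances from P to the three vertices is at most the maximum over vertices A_i of the sum of the lengths of the two sides meeting at A_i; i.e., ‖PA₁‖+‖PA₂‖+‖PA₃‖ ≤ max{‖A₁A₂‖+‖A₁A₃‖, ‖A₂A₁‖+‖A₂A₃‖, ‖A₃A₁‖+‖A₃A₂‖}. -/
theorem stmt0 (A₁ A₂ A₃ P : EuclideanSpace ℝ (Fin 2))
    (hP : P ∈ convexHull ℝ ({A₁, A₂, A₃} : Set (EuclideanSpace ℝ (Fin 2)))) :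
    dist P A₁ + dist P A₂ + dist P A₃ ≤
      max (max (dist A₁ A₂ + dist A₁ A₃) (dist A₂ A₁ + dist A₂ A₃))
        (dist A₃ A₁ + dist A₃ A₂) := by
  have hf : ConvexOn ℝ Set.univ
      (fun x : EuclideanSpace ℝ (Fin 2) => dist x A₁ + dist x A₂ + dist x A₃) :=
    ((convexOn_dist A₁ convex_univ).add (convexOn_dist A₂ convex_univ)).add
      (convexOn_dist A₃ convex_univ)
  obtain ⟨y, hy, hle⟩ := hf.exists_ge_of_mem_convexHull (Set.subset_univ _) hP
  simp only [Set.mem_insert_iff, Set.mem_singleton_iff] at hy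
  rcases hy with rfl | rfl | rfl <;>
    simp only [dist_self, zero_add, add_zero] at hle <;>
    [exact le_trans hle (le_max_of_le_left (le_max_left _ _));
     refine le_trans hle (le_max_of_le_left (le_max_of_le_right ?_));
     refine le_trans hle (le_max_right _ _)] <;>
    rw [add_comm] <;> simp [dist_comm]
end

section
/- For any point P in an n-dimensional simplex with vertices A₁,…,A_{n+1} in ℝⁿ, the sum ∑_{i=1}^{n+1} ‖PA_i‖ is at most the maximum over vertices A_i of the sum of the n edge lengths ∑_{j≠i} ‖A_iA_j‖. -/
/-! The total distance to the vertices is a convex function of the point, so on the simplex it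
attains its maximum at a vertex `A k`, where it equals the sum of the edge lengths at `A k`. -/

variable {ι E : Type*} [SeminormedAddCommGroup E] [NormedSpace ℝ E]

theorem convexOn_sum_dist (s : Finset ι) (x : ι → E) {t : Set E} (ht : Convex ℝ t) :
    ConvexOn ℝ t fun y => ∑ i ∈ s, dist y (x i) := by
  classical
  induction s using Finset.induction_on with
  | empty => simpa using convexOn_const 0 ht
  | insert a s ha ih =>
    simp_rw [Finset.sum_insert ha]
    exact (convexOn_dist (x a) ht).add ih

theorem exists_sum_dist_le_sum_dist_of_mem_convexHull [Fintype ι] (x : ι → E) {p : E}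
    (hp : p ∈ convexHull ℝ (Set.range x)) :
    ∃ k, ∑ i, dist p (x i) ≤ ∑ i, dist (x k) (x i) := by
  obtain ⟨_, ⟨k, rfl⟩, hk⟩ :=
    (convexOn_sum_dist Finset.univ x convex_univ).exists_ge_of_mem_convexHull
      (Set.subset_univ _) hp
  exact ⟨k, hk⟩

theorem stmt3_general (n : ℕ) (A : Fin (n + 1) → EuclideanSpace ℝ (Fin n))
    (P : EuclideanSpace ℝ (Fin n))
    (hP : P ∈ convexHull ℝ (Set.range A)) :
    ∑ i, dist P (A i) ≤
      Finset.univ.sup' Finset.univ_nonempty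
        (fun i => ∑ j ∈ Finset.univ.erase i, dist (A i) (A j)) := by
  obtain ⟨k, hk⟩ := exists_sum_dist_le_sum_dist_of_mem_convexHull A hP
  calc ∑ i, dist P (A i) ≤ ∑ j, dist (A k) (A j) := hk
    _ = ∑ j ∈ Finset.univ.erase k, dist (A k) (A j) :=
      (Finset.sum_erase (f := fun j => dist (A k) (A j)) _ (dist_self _)).symm
    _ ≤ _ :=
      Finset.le_sup' (fun i => ∑ j ∈ Finset.univ.erase i, dist (A i) (A j)) (Finset.mem_univ k)

theorem stmt3 (n : ℕ) (A : Fin (n + 1) → EuclideanSpace ℝ (Fin n))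
    (hA : AffineIndependent ℝ A)
    (P : EuclideanSpace ℝ (Fin n))
    (hP : P ∈ convexHull ℝ (Set.range A)) :
    ∑ i, dist P (A i) ≤
      Finset.univ.sup' Finset.univ_nonempty
        (fun i => ∑ j ∈ Finset.univ.erase i, dist (A i) (A j)) :=
  stmt3_general n A P hP
end

section
/- Let S = {A₁, A₂, A₃, A₄} be four distinct points in the plane, three of which are collinear. Then σ(S)/D(S) < 5, where σ(S) is the sum of all six pairwise distances and D(S) is the maximum pairwise distance. -/
/-!
Of three distinct collinear points, one (say `b`) lies strictly between the other two (`a`, `c`).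
Then `|ab| + |bc| = |ac| ≤ D`, and by strict convexity of the norm the fourth point `p` satisfies
`|bp| < max |ap| |cp| ≤ D`; the remaining three distances are at most `D` each.
-/

open Finset

section StrictConvex

variable {V P : Type*} [NormedAddCommGroup V] [NormedSpace ℝ V] [StrictConvexSpace ℝ V]
  [PseudoMetricSpace P] [NormedAddTorsor V P]

theorem Sbtw.sum_six_dist_lt {a b c p : P} (h : Sbtw ℝ a b c) {D : ℝ}
    (hac : dist a c ≤ D) (hap : dist a p ≤ D) (hcp : dist c p ≤ D) :
    dist a b + dist a c + dist a p + dist b c + dist b p + dist c p < 5 * D := by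
  have hsplit : dist a b + dist b c = dist a c := h.wbtw.dist_add_dist
  have hbp : dist b p < D := (h.dist_lt_max_dist p).trans_le (max_le hap hcp)
  linarith

theorem Collinear.sum_six_dist_lt {a b c p : P} (hab : a ≠ b) (hbc : b ≠ c) (hac : a ≠ c)
    (hcol : Collinear ℝ ({a, b, c} : Set P)) {D : ℝ}
    (h₁ : dist a b ≤ D) (h₂ : dist a c ≤ D) (h₃ : dist a p ≤ D)
    (h₄ : dist b c ≤ D) (h₅ : dist b p ≤ D) (h₆ : dist c p ≤ D) :
    dist a b + dist a c + dist a p + dist b c + dist b p + dist c p < 5 * D := by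
  rcases hcol.wbtw_or_wbtw_or_wbtw with h | h | h
  · exact Sbtw.sum_six_dist_lt ⟨h, hab.symm, hbc⟩ h₂ h₃ h₆
  · have := Sbtw.sum_six_dist_lt (p := p) ⟨h, hbc.symm, hac.symm⟩
      ((dist_comm b a).trans_le h₁) h₅ h₃
    linarith [dist_comm b a, dist_comm c a]
  · have := Sbtw.sum_six_dist_lt (p := p) ⟨h, hac, hab⟩
      ((dist_comm c b).trans_le h₄) h₆ h₅
    linarith [dist_comm c a, dist_comm c b]

end StrictConvex

theorem Fin.exists_perm_zero_one_two_eq {i j k : Fin 4}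
    (hij : i ≠ j) (hjk : j ≠ k) (hik : i ≠ k) :
    ∃ σ : Equiv.Perm (Fin 4), σ 0 = i ∧ σ 1 = j ∧ σ 2 = k := by
  revert i j k; decide

section FourPoints

variable {P : Type*} [PseudoMetricSpace P]

theorem sum_dist_pairs_fin_four_eq_half (A : Fin 4 → P) :
    ∑ p ∈ univ.filter (fun p : Fin 4 × Fin 4 => p.1 < p.2), dist (A p.1) (A p.2) =
      (∑ x, ∑ y, dist (A x) (A y)) / 2 := by
  simp [sum_filter, ← univ_product_univ, sum_product, Fin.sum_univ_four, dist_comm]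
  ring

theorem sum_sum_dist_comp_perm {ι : Type*} [Fintype ι] (A : ι → P) (σ : Equiv.Perm ι) :
    ∑ x, ∑ y, dist (A (σ x)) (A (σ y)) = ∑ x, ∑ y, dist (A x) (A y) := by
  rw [← Equiv.sum_comp σ (fun x => ∑ y, dist (A x) (A y))]
  exact Fintype.sum_congr _ _ fun x => Equiv.sum_comp σ (fun y => dist (A (σ x)) (A y))

theorem sum_sum_dist_fin_four (A : Fin 4 → P) :
    ∑ x, ∑ y, dist (A x) (A y) = 2 * (dist (A 0) (A 1) + dist (A 0) (A 2) + dist (A 0) (A 3) +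
      dist (A 1) (A 2) + dist (A 1) (A 3) + dist (A 2) (A 3)) := by
  simp [Fin.sum_univ_four, dist_comm]
  ring

end FourPoints

theorem stmt5 (A : Fin 4 → EuclideanSpace ℝ (Fin 2))
    (hinj : Function.Injective A)
    (hcol : ∃ i j k : Fin 4, i ≠ j ∧ j ≠ k ∧ i ≠ k ∧
      Collinear ℝ ({A i, A j, A k} : Set (EuclideanSpace ℝ (Fin 2))))
    (D : ℝ)
    (hD : IsGreatest {d : ℝ | ∃ i j : Fin 4, i < j ∧ d = dist (A i) (A j)} D)
    (hDpos : 0 < D) :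
    (∑ p ∈ Finset.univ.filter (fun p : Fin 4 × Fin 4 => p.1 < p.2),
        dist (A p.1) (A p.2)) / D < 5 := by
  obtain ⟨i, j, k, hij, hjk, hik, hcol⟩ := hcol
  obtain ⟨σ, rfl, rfl, rfl⟩ := Fin.exists_perm_zero_one_two_eq hij hjk hik
  have hle : ∀ x y, dist (A (σ x)) (A (σ y)) ≤ D := by
    intro x y
    rcases lt_trichotomy (σ x) (σ y) with h | h | h
    · exact hD.2 ⟨_, _, h, rfl⟩
    · rw [h, dist_self]; exact hDpos.le
    · rw [dist_comm]; exact hD.2 ⟨_, _, h, rfl⟩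
  have key := Collinear.sum_six_dist_lt (p := A (σ 3))
    (hinj.ne hij) (hinj.ne hjk) (hinj.ne hik) hcol
    (hle 0 1) (hle 0 2) (hle 0 3) (hle 1 2) (hle 1 3) (hle 2 3)
  rw [div_lt_iff₀ hDpos, sum_dist_pairs_fin_four_eq_half, ← sum_sum_dist_comp_perm A σ,
    sum_sum_dist_fin_four (fun x => A (σ x))]
  linarith
end

section
/- The supremum over all 4-point configurations S in the plane of σ(S)/D(S) equals 4 + 2√(2−√3), where σ(S) is the sum of all pairwise distances and D(S) is the diameter of S. Moreover this value is attained: there exist four planar points achieving σ(S)/D(S) = 4 + 2√(2−√3). -/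
/-!
Scaling and rotating, we may place the two points realising the diameter at `0` and `1` in `ℂ`;
the other two points `z`, `w` are then `Admissible`, and the claim becomes
`fiveDist z w ≤ 3 + 2κ`, where `κ = √(2 - √3) = 2 sin 15°`.

Along every line in the `(z, w)`-space `fiveDist` is convex. Hence moving `z` away from `w`,
then `w` away from `z`, then translating the pair parallel to `[0, 1]`, each time until one more
of the five distances equals `1`, does not decrease `fiveDist` (when `z = w` it is at most `4`).
We are left with two cases: `z` and `w` on the unit circle about `0`, or (up to the symmetries
`z ↔ w` and `z ↦ 1 - z`) a path `1, 0, z, w` of three unit segments. Both are inequalities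
between trigonometric functions of two angles, proved algebraically. Equality holds for the
equilateral triangle `0, 1, e^{iπ/3}` together with the point `e^{iπ/3} - i`.
-/

open Real Set

namespace PlanarFourPoints

noncomputable def κ : ℝ := √(2 - √3)

lemma sqrt_three_sq : √3 ^ 2 = 3 := sq_sqrt (by norm_num)

lemma three_halves_lt_sqrt_three : 3 / 2 < √3 := by nlinarith [sqrt_three_sq, sqrt_nonneg 3]

lemma sqrt_three_lt_seven_quarters : √3 < 7 / 4 := by nlinarith [sqrt_three_sq, sqrt_nonneg 3]

lemma κ_nonneg : 0 ≤ κ := sqrt_nonneg _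

lemma κ_sq : κ ^ 2 = 2 - √3 := sq_sqrt (by linarith [sqrt_three_lt_seven_quarters])

lemma κ_le_one : κ ≤ 1 := by nlinarith [κ_sq, κ_nonneg, three_halves_lt_sqrt_three]

lemma one_le_two_mul_κ : 1 ≤ 2 * κ := by nlinarith [κ_sq, κ_nonneg, sqrt_three_lt_seven_quarters]

/-- With `χ = 2 sin θ` and `z = 2 sin 2θ ≤ 1`, the bound `χ² ≤ 5/2` excludes the branch
`θ ≥ 75°`, so `θ ≤ 15°`. -/
lemma le_κ_of_sq_mul_four_sub_sq {χ z : ℝ} (hz : 0 ≤ z) (hz₁ : z ≤ 1)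
    (hχz : χ ^ 2 * (4 - χ ^ 2) = z ^ 2) (hχ : χ ^ 2 ≤ 5 / 2) : χ ≤ κ := by
  have : χ ^ 2 ≤ 2 - √3 := by nlinarith [sqrt_three_sq, three_halves_lt_sqrt_three]
  nlinarith [κ_sq, κ_nonneg]

/-! In the next two lemmas `x = 2 sin α`, `y = 2 sin β`, `P = 2 cos α`, `Q = 2 cos β`, and `z` is
`2 sin (α + β)`, resp. `2 sin (α - β)`. -/

lemma add_add_le_of_two_mul_eq_add {x y z P Q : ℝ} (hx : 0 ≤ x) (hy : 0 ≤ y) (hz : 0 ≤ z)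
    (hx₁ : x ≤ 1) (hy₁ : y ≤ 1) (hz₁ : z ≤ 1) (hP : 0 ≤ P) (hQ : 0 ≤ Q)
    (hP₂ : P ^ 2 = 4 - x ^ 2) (hQ₂ : Q ^ 2 = 4 - y ^ 2) (hz₂ : 2 * z = x * Q + y * P) :
    x + y + z ≤ 1 + 2 * κ := by
  have hPQ : 2 * (P * Q) ≤ 8 - x ^ 2 - y ^ 2 := by
    refine (sq_le_sq₀ (by positivity) (by nlinarith)).1 ?_
    nlinarith [sq_nonneg (x ^ 2 - y ^ 2)]
  -- `χ = 2 sin ((α + β) / 2)`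
  obtain ⟨χ, hχ, hχ₂⟩ : ∃ χ : ℝ, 0 ≤ χ ∧ χ ^ 2 = 2 - (P * Q - x * y) / 2 :=
    ⟨√_, sqrt_nonneg _, sq_sqrt (by nlinarith [mul_nonneg hx hy])⟩
  have hxy : x + y ≤ 2 * χ := (sq_le_sq₀ (by positivity) (by positivity)).1 (by nlinarith)
  have hχκ : χ ≤ κ := by
    refine le_κ_of_sq_mul_four_sub_sq hz hz₁ ?_ ?_
    · linear_combination (4 - χ ^ 2 - (2 - (P * Q - x * y) / 2)) * hχ₂
        - ((2 * z + x * Q + y * P) / 4) * hz₂ - hP₂ - ((P ^ 2 + x ^ 2) / 4) * hQ₂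
    · nlinarith [mul_nonneg hP hQ, mul_nonneg hx hy, mul_le_one₀ hx₁ hy hy₁]
  linarith

lemma add_add_le_of_two_mul_eq_sub {x y z P Q : ℝ} (hx : 0 ≤ x) (hy : 0 ≤ y) (hz : 0 ≤ z)
    (hx₁ : x ≤ 1) (hP : 0 ≤ P) (hQ : 0 ≤ Q)
    (hP₂ : P ^ 2 = 4 - x ^ 2) (hQ₂ : Q ^ 2 = 4 - y ^ 2) (hz₂ : 2 * z = x * Q - y * P) :
    x + y + z ≤ 1 + 2 * κ := by
  have hP₃ : 3 / 2 ≤ P := by nlinarith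
  have hP₄ : P ≤ 2 := by nlinarith
  have hQ₄ : Q ≤ 2 := by nlinarith
  have hyQ : x * y * Q ≤ 4 - 2 * P + P * y ^ 2 := by
    have hsq : (4 - 2 * P + P * y ^ 2) ^ 2 - (x * y * Q) ^ 2 = 4 * (P - 2 + y ^ 2) ^ 2 := by
      linear_combination (-(y ^ 2 * (4 - y ^ 2))) * hP₂ + (-(x ^ 2 * y ^ 2)) * hQ₂
    have : 0 ≤ 4 - 2 * P + P * y ^ 2 := by nlinarith
    nlinarith [sq_nonneg (P - 2 + y ^ 2), mul_nonneg (mul_nonneg hx hy) hQ]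
  -- `χ = 2 sin (α / 2)`
  obtain ⟨χ, hχ, hχ₂⟩ : ∃ χ : ℝ, 0 ≤ χ ∧ χ ^ 2 = 2 - P :=
    ⟨√(2 - P), sqrt_nonneg _, sq_sqrt (by nlinarith)⟩
  have hyz : y + z ≤ 2 * χ := by
    have hid : 16 * (2 - P) - (x * Q + y * (2 - P)) ^ 2
        = (2 - P) * (8 - 4 * P + 2 * P * y ^ 2 - 2 * x * y * Q) := by
      linear_combination (y ^ 2 - 4) * hP₂ + (-(x ^ 2)) * hQ₂
    refine (sq_le_sq₀ (by positivity) (by positivity)).1 ?_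
    nlinarith [mul_nonneg (by nlinarith : (0 : ℝ) ≤ 2 - P)
      (by nlinarith : 0 ≤ 8 - 4 * P + 2 * P * y ^ 2 - 2 * x * y * Q)]
  have hχκ : χ ≤ κ :=
    le_κ_of_sq_mul_four_sub_sq hx hx₁ (by linear_combination (2 - χ ^ 2 + P) * hχ₂ - hP₂)
      (by nlinarith)
  linarith

/-- `hrel` says that `x`, `y`, `z` are the sides of a triangle inscribed in the unit circle: it
combines the law of cosines `x² + y² - z² = 2xy cos γ` with the law of sines `z = 2 sin γ`. -/
lemma add_add_le_of_inscribed {x y z : ℝ} (hx : 0 ≤ x) (hy : 0 ≤ y) (hz : 0 ≤ z)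
    (hx₁ : x ≤ 1) (hy₁ : y ≤ 1) (hz₁ : z ≤ 1)
    (hrel : (x ^ 2 + y ^ 2 - z ^ 2) ^ 2 = x ^ 2 * y ^ 2 * (4 - z ^ 2)) :
    x + y + z ≤ 1 + 2 * κ := by
  obtain ⟨P, hP, hP₂⟩ : ∃ P : ℝ, 0 ≤ P ∧ P ^ 2 = 4 - x ^ 2 :=
    ⟨√(4 - x ^ 2), sqrt_nonneg _, sq_sqrt (by nlinarith)⟩
  obtain ⟨Q, hQ, hQ₂⟩ : ∃ Q : ℝ, 0 ≤ Q ∧ Q ^ 2 = 4 - y ^ 2 :=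
    ⟨√(4 - y ^ 2), sqrt_nonneg _, sq_sqrt (by nlinarith)⟩
  have e₁ : x ^ 2 * Q ^ 2 = 4 * x ^ 2 - x ^ 2 * y ^ 2 := by rw [hQ₂]; ring
  have e₂ : y ^ 2 * P ^ 2 = 4 * y ^ 2 - x ^ 2 * y ^ 2 := by rw [hP₂]; ring
  have hfac : (2 * z - (x * Q + y * P)) * (2 * z + (x * Q + y * P))
      * ((2 * z - (x * Q - y * P)) * (2 * z + (x * Q - y * P))) = 0 := by
    linear_combination 16 * hrel
      + (-8 * z ^ 2 + (x ^ 2 * Q ^ 2 - y ^ 2 * P ^ 2 + 4 * x ^ 2 - 4 * y ^ 2)) * e₁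
      + (-8 * z ^ 2 - (x ^ 2 * Q ^ 2 - y ^ 2 * P ^ 2 + 4 * x ^ 2 - 4 * y ^ 2)) * e₂
  rcases mul_eq_zero.1 hfac with h | h <;> rcases mul_eq_zero.1 h with h | h
  · exact add_add_le_of_two_mul_eq_add hx hy hz hx₁ hy₁ hz₁ hP hQ hP₂ hQ₂ (by linarith)
  · have : x * Q + y * P = 0 := by nlinarith [mul_nonneg hx hQ, mul_nonneg hy hP]
    exact add_add_le_of_two_mul_eq_add hx hy hz hx₁ hy₁ hz₁ hP hQ hP₂ hQ₂ (by linarith)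
  · exact add_add_le_of_two_mul_eq_sub hx hy hz hx₁ hP hQ hP₂ hQ₂ (by linarith)
  · linarith [add_add_le_of_two_mul_eq_sub hy hx hz hy₁ hQ hP hQ₂ hP₂ (by linarith)]

/-- The function `T ↦ α √(1 - T) + √(β + 2 E T)` is concave; the hypotheses say that its
derivative is nonnegative at `T` and at `T'`. -/
lemma mul_sqrt_one_sub_add_sqrt_le {α β E T T' : ℝ} (hα : 0 ≤ α) (hβ : 0 ≤ β) (hE : 0 < E)
    (hT : 0 ≤ T) (hTT' : T ≤ T') (hT' : T' ≤ 1)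
    (hd : α ^ 2 * (β + 2 * E * T) ≤ 4 * E ^ 2 * (1 - T))
    (hd' : α ^ 2 * (β + 2 * E * T') ≤ 4 * E ^ 2 * (1 - T')) :
    α * √(1 - T) + √(β + 2 * E * T) ≤ α * √(1 - T') + √(β + 2 * E * T') := by
  rcases hTT'.eq_or_lt with rfl | hlt
  · rfl
  set A := √(1 - T)
  set A' := √(1 - T')
  set B := √(β + 2 * E * T)
  set B' := √(β + 2 * E * T')
  have hA : A ^ 2 = 1 - T := sq_sqrt (by linarith)
  have hA' : A' ^ 2 = 1 - T' := sq_sqrt (by linarith)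
  have hB : B ^ 2 = β + 2 * E * T := sq_sqrt (by positivity)
  have hB' : B' ^ 2 = β + 2 * E * T' := sq_sqrt (by nlinarith)
  have hk : α * B ≤ 2 * E * A := (sq_le_sq₀ (by positivity) (by positivity)).1 (by
    rw [mul_pow, hB, mul_pow, mul_pow, hA]; linarith)
  have hk' : α * B' ≤ 2 * E * A' := (sq_le_sq₀ (by positivity) (by positivity)).1 (by
    rw [mul_pow, hB', mul_pow, mul_pow, hA']; linarith)
  have hpos : 0 < (A + A') * (B + B') := by
    have : 0 < A := sqrt_pos.2 (by linarith)
    have : 0 < B' := sqrt_pos.2 (by nlinarith)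
    positivity
  have key : α * (A - A') * ((A + A') * (B + B')) ≤ (B' - B) * ((A + A') * (B + B')) :=
    calc α * (A - A') * ((A + A') * (B + B')) = (T' - T) * (α * B + α * B') := by
          linear_combination α * (B + B') * (hA - hA')
      _ ≤ (T' - T) * (2 * E * A + 2 * E * A') := by gcongr
      _ = (B' - B) * ((A + A') * (B + B')) := by linear_combination (A + A') * (hB - hB')
  linarith [le_of_mul_le_mul_right key hpos]

lemma eight_mul_one_sub_mul_le {σ T : ℝ} (hσ : 1 / 2 ≤ σ) (hT' : T ≤ (2 - √3) / 4) :
    8 * (1 - σ) * ((1 - 2 * σ) ^ 2 + 2 * (4 * σ) * T) ≤ 4 * (4 * σ) ^ 2 * (1 - T) := by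
  have h₁ : T ≤ 1 / 8 := by nlinarith [three_halves_lt_sqrt_three]
  have h₂ : 64 * σ * T ≤ 8 * σ := by nlinarith
  nlinarith [h₂, mul_nonneg (by linarith : (0 : ℝ) ≤ σ - 1 / 2) (sq_nonneg σ),
    mul_nonneg (by linarith : (0 : ℝ) ≤ σ) (sq_nonneg (σ - 1 / 2)), sq_nonneg (σ - 1 / 2)]

lemma mul_sqrt_add_sqrt_le_of_half_le {σ c T α : ℝ} (hσc : σ ^ 2 + c ^ 2 = 1) (hσ : 1 / 2 ≤ σ)
    (hc : 1 / 2 ≤ c) (hT : 0 ≤ T) (hTT' : T ≤ (1 - (√3 * c + σ) / 2) / 2) (hα : 0 ≤ α)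
    (hα₂ : α ^ 2 = 8 * (1 - σ)) :
    α * √(1 - T) + √((1 - 2 * σ) ^ 2 + 2 * (4 * σ) * T) ≤ 1 + 2 * κ := by
  have hσ₁ : σ ≤ 1 := by nlinarith
  have hc₁ : c ≤ 1 := by nlinarith
  have h3 := sqrt_nonneg 3
  set T' := (1 - (√3 * c + σ) / 2) / 2 with hT'
  have hT'₀ : 0 ≤ T' := by
    have : √3 * c + σ ≤ 2 := (sq_le_sq₀ (by positivity) (by norm_num)).1
      (by nlinarith [sqrt_three_sq, sq_nonneg (c - √3 * σ)])
    linarith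
  have hT'₃ : T' ≤ (2 - √3) / 4 := by
    have : √3 * (1 - c) ≤ σ := (sq_le_sq₀ (by nlinarith) (by linarith)).1
      (by nlinarith [sqrt_three_sq])
    nlinarith
  have hmono := mul_sqrt_one_sub_add_sqrt_le hα (sq_nonneg (1 - 2 * σ)) (by linarith : 0 < 4 * σ)
    hT hTT' (by linarith) (by rw [hα₂]; exact eight_mul_one_sub_mul_le hσ (hTT'.trans hT'₃))
    (by rw [hα₂]; exact eight_mul_one_sub_mul_le hσ hT'₃)
  have e₁ : α * √(1 - T') = 1 + √3 * c - σ := by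
    refine (sq_eq_sq₀ (by positivity) (by nlinarith)).1 ?_
    rw [mul_pow, hα₂, sq_sqrt (by linarith), hT']
    linear_combination (-(c ^ 2)) * sqrt_three_sq + (-3) * hσc
  have e₂ : √((1 - 2 * σ) ^ 2 + 2 * (4 * σ) * T') = √3 * σ - c := by
    have : c ≤ √3 * σ := (sq_le_sq₀ (by linarith) (by positivity)).1
      (by nlinarith [sqrt_three_sq])
    refine (sq_eq_sq₀ (sqrt_nonneg _) (by linarith)).1 ?_
    rw [sq_sqrt (by positivity), hT']
    linear_combination (-(σ ^ 2)) * sqrt_three_sq - hσc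
  have e₃ : (√3 - 1) * (c + σ) ≤ 2 * κ := by
    refine (sq_le_sq₀ (by nlinarith [three_halves_lt_sqrt_three]) (by nlinarith [κ_nonneg])).1 ?_
    nlinarith [κ_sq, sqrt_three_sq, sqrt_three_lt_seven_quarters, sq_nonneg (c - σ)]
  calc _ ≤ α * √(1 - T') + √((1 - 2 * σ) ^ 2 + 2 * (4 * σ) * T') := hmono
    _ = 1 + (√3 - 1) * (c + σ) := by rw [e₁, e₂]; ring
    _ ≤ 1 + 2 * κ := by linarith

lemma mul_sqrt_add_sqrt_le_of_lt_half {σ c T α : ℝ} (hσc : σ ^ 2 + c ^ 2 = 1) (hσ : 1 / 2 ≤ σ)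
    (hc₀ : 0 ≤ c) (hc : c < 1 / 2) (hT : 0 ≤ T) (hTT' : T ≤ (1 - σ) / 2) (hα : 0 ≤ α)
    (hα₂ : α ^ 2 = 8 * (1 - σ)) :
    α * √(1 - T) + √((1 - 2 * σ) ^ 2 + 2 * (4 * σ) * T) ≤ 1 + 2 * κ := by
  have hσ₁ : σ ≤ 1 := by nlinarith
  have hT'₃ : (1 - σ) / 2 ≤ (2 - √3) / 4 := by
    have : √3 ≤ 2 * σ := (sq_le_sq₀ (sqrt_nonneg 3) (by linarith)).1
      (by rw [sqrt_three_sq]; nlinarith)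
    linarith
  have hmono := mul_sqrt_one_sub_add_sqrt_le hα (sq_nonneg (1 - 2 * σ)) (by linarith : 0 < 4 * σ)
    hT hTT' (by linarith) (by rw [hα₂]; exact eight_mul_one_sub_mul_le hσ (hTT'.trans hT'₃))
    (by rw [hα₂]; exact eight_mul_one_sub_mul_le hσ hT'₃)
  have e₁ : α * √(1 - (1 - σ) / 2) = 2 * c := by
    refine (sq_eq_sq₀ (by positivity) (by linarith)).1 ?_
    rw [mul_pow, hα₂, sq_sqrt (by linarith)]
    linear_combination (-4) * hσc
  have e₂ : (1 - 2 * σ) ^ 2 + 2 * (4 * σ) * ((1 - σ) / 2) = 1 := by ring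
  calc _ ≤ α * √(1 - (1 - σ) / 2) + √((1 - 2 * σ) ^ 2 + 2 * (4 * σ) * ((1 - σ) / 2)) := hmono
    _ = 2 * c + 1 := by rw [e₁, e₂, sqrt_one]
    _ ≤ 1 + 2 * κ := by linarith [one_le_two_mul_κ]

/-- With `u₁ = 2 sin α`, `u₂ = 2 cos α`, `v₁ = 2 cos β`, `v₂ = 2 sin β` and `0 ≤ α, β ≤ 30°`,
the quantities below are `σ = cos (α + β)`, `c = sin (α + β)` and `T = sin² ((α - β) / 2)`.
For fixed `α + β` the sum grows with `T` until the larger angle reaches `30°` or the smaller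
one reaches `0`. -/
lemma add_add_le_of_sq_add_sq {u₁ u₂ v₁ v₂ s : ℝ} (hu₁ : 0 ≤ u₁) (hu₂ : 0 ≤ u₂) (hv₁ : 0 ≤ v₁)
    (hv₂ : 0 ≤ v₂) (hs : 0 ≤ s) (hu₁' : u₁ ≤ 1) (hv₂' : v₂ ≤ 1) (hu : u₁ ^ 2 + u₂ ^ 2 = 4)
    (hv : v₁ ^ 2 + v₂ ^ 2 = 4) (hs₂ : s ^ 2 = 1 - u₁ * v₂ * (v₁ * u₂ - v₂ * u₁) / 2) :
    u₁ + v₂ + s ≤ 1 + 2 * κ := by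
  set σ := (v₁ * u₂ - v₂ * u₁) / 4 with hσ_def
  set c := (u₂ * v₂ + u₁ * v₁) / 4
  set T := (1 - (u₁ * v₂ + u₂ * v₁) / 4) / 2 with hT_def
  have hσc : σ ^ 2 + c ^ 2 = 1 := by
    linear_combination ((v₁ ^ 2 + v₂ ^ 2) / 16) * hu + (1 / 4) * hv
  have hσ : 1 / 2 ≤ σ := by
    have : 2 + v₂ * u₁ ≤ v₁ * u₂ := (sq_le_sq₀ (by positivity) (by positivity)).1 (by
      nlinarith [mul_le_one₀ hv₂' hu₁ hu₁', mul_nonneg hv₂ hu₁])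
    linarith
  have hT : 0 ≤ T := by
    have : u₁ * v₂ + u₂ * v₁ ≤ 4 := (sq_le_sq₀ (by positivity) (by norm_num)).1 (by
      nlinarith [sq_nonneg (u₁ * v₁ - u₂ * v₂)])
    linarith
  have hT₃ : T ≤ (2 - √3) / 4 := by
    have : 2 * √3 ≤ u₁ * v₂ + u₂ * v₁ := (sq_le_sq₀ (by positivity) (by positivity)).1 (by
      rw [mul_pow, sqrt_three_sq]
      nlinarith [mul_nonneg hu₁ hv₂, mul_nonneg hu₂ hv₁, mul_le_one₀ hu₁' hv₂ hv₂'])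
    linarith
  have hs₃ : s ^ 2 = (1 - 2 * σ) ^ 2 + 2 * (4 * σ) * T := by
    rw [hs₂]; ring
  obtain ⟨α, hα, hα₂⟩ : ∃ α : ℝ, 0 ≤ α ∧ α ^ 2 = 8 * (1 - σ) :=
    ⟨√_, sqrt_nonneg _, sq_sqrt (by nlinarith)⟩
  have hαT : α * √(1 - T) = u₁ + v₂ := by
    refine (sq_eq_sq₀ (by positivity) (by positivity)).1 ?_
    rw [mul_pow, hα₂, sq_sqrt (by linarith [sqrt_nonneg 3])]
    linear_combination (-u₂ ^ 2 / 4) * hv + (-(4 - v₂ ^ 2) / 4) * hu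
  rw [← hαT, ← sqrt_sq hs, hs₃]
  rcases le_or_gt (1 / 2) c with hc | hc
  · refine mul_sqrt_add_sqrt_le_of_half_le hσc hσ hc hT ?_ hα hα₂
    have h₁ : √3 * v₂ ≤ v₁ := (sq_le_sq₀ (by positivity) hv₁).1 (by
      rw [mul_pow, sqrt_three_sq]; nlinarith only [hv, hv₂', hv₂])
    have h₂ : √3 * u₁ ≤ u₂ := (sq_le_sq₀ (by positivity) hu₂).1 (by
      rw [mul_pow, sqrt_three_sq]; nlinarith only [hu, hu₁', hu₁])
    have : (u₁ * v₂ + u₂ * v₁) / 4 - (√3 * c + σ) / 2 = (v₁ - √3 * v₂) * (u₂ - √3 * u₁) / 8 := by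
      linear_combination (-(v₂ * u₁) / 8) * sqrt_three_sq
    nlinarith [mul_nonneg (sub_nonneg.2 h₁) (sub_nonneg.2 h₂)]
  · refine mul_sqrt_add_sqrt_le_of_lt_half hσc hσ (by positivity) hc hT ?_ hα hα₂
    rw [hσ_def, hT_def]
    nlinarith [mul_nonneg hu₁ hv₂]

/-- `a`, `g`, `w` are the pairwise inner products of three unit vectors `e₁`, `e₂`, `e₃` of the
plane (so that their Gram determinant `hrel` vanishes), `u₁ = ‖e₂ - e₁‖`, `v₂ = ‖e₂ + e₃‖` and
`s = ‖e₂ + e₃ - e₁‖`. -/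
lemma add_add_le_of_gram {a g w u₁ v₂ s : ℝ} (hu₁ : 0 ≤ u₁) (hv₂ : 0 ≤ v₂) (hs : 0 ≤ s)
    (hu₁' : u₁ ≤ 1) (hv₂' : v₂ ≤ 1) (hs' : s ≤ 1)
    (hrel : a ^ 2 + g ^ 2 + w ^ 2 - 2 * a * g * w = 1) (hu₁₂ : u₁ ^ 2 = 2 - 2 * a)
    (hv₂₂ : v₂ ^ 2 = 2 + 2 * g) (hs₂ : s ^ 2 = 3 - 2 * a + 2 * g - 2 * w) :
    u₁ + v₂ + s ≤ 1 + 2 * κ := by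
  obtain rfl : a = 1 - u₁ ^ 2 / 2 := by linarith
  obtain rfl : g = v₂ ^ 2 / 2 - 1 := by linarith
  obtain ⟨u₂, hu₂, hu₂₂⟩ : ∃ u₂ : ℝ, 0 ≤ u₂ ∧ u₂ ^ 2 = 4 - u₁ ^ 2 :=
    ⟨√_, sqrt_nonneg _, sq_sqrt (by nlinarith)⟩
  obtain ⟨v₁, hv₁, hv₁₂⟩ : ∃ v₁ : ℝ, 0 ≤ v₁ ∧ v₁ ^ 2 = 4 - v₂ ^ 2 :=
    ⟨√_, sqrt_nonneg _, sq_sqrt (by nlinarith)⟩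
  set a := 1 - u₁ ^ 2 / 2
  set g := v₂ ^ 2 / 2 - 1
  -- `h = u₁ u₂ v₁ v₂ / 4` satisfies `h² = (1 - a²) (1 - g²)`, so `w = a g ± h`
  have hw : (w - (a * g + u₁ * u₂ * v₁ * v₂ / 4)) * (w - (a * g - u₁ * u₂ * v₁ * v₂ / 4)) = 0 := by
    linear_combination hrel - (u₁ ^ 2 * v₂ ^ 2 / 16) * (v₁ ^ 2 * hu₂₂ + (4 - u₁ ^ 2) * hv₁₂)
  rcases mul_eq_zero.1 hw with hw | hw
  · refine add_add_le_of_sq_add_sq hu₁ hu₂ hv₁ hv₂ hs hu₁' hv₂' (by linarith) (by linarith) ?_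
    linear_combination hs₂ - 2 * hw
  · have : u₁ * v₂ ≤ 0 := by
      nlinarith [mul_nonneg (mul_nonneg hu₁ hv₂) (mul_nonneg hu₂ hv₁), sq_nonneg (u₁ * v₂)]
    rcases mul_eq_zero.1 (le_antisymm this (by positivity)) with h | h <;>
      linarith [one_le_two_mul_κ]

noncomputable def fiveDist (z w : ℂ) : ℝ := ‖z‖ + ‖z - 1‖ + ‖w‖ + ‖w - 1‖ + ‖z - w‖

def Admissible (z w : ℂ) : Prop :=
  ‖z‖ ≤ 1 ∧ ‖z - 1‖ ≤ 1 ∧ ‖w‖ ≤ 1 ∧ ‖w - 1‖ ≤ 1 ∧ ‖z - w‖ ≤ 1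

lemma fiveDist_comm (z w : ℂ) : fiveDist z w = fiveDist w z := by
  unfold fiveDist; rw [norm_sub_rev z w]; ring

lemma fiveDist_one_sub (z w : ℂ) : fiveDist (1 - z) (1 - w) = fiveDist z w := by
  unfold fiveDist
  rw [norm_sub_rev 1 z, norm_sub_rev 1 w, sub_sub_cancel_left, sub_sub_cancel_left, norm_neg,
    norm_neg, sub_sub_sub_cancel_left, norm_sub_rev w z]
  ring

lemma Admissible.symm {z w : ℂ} (h : Admissible z w) : Admissible w z := by
  obtain ⟨h₁, h₂, h₃, h₄, h₅⟩ := h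
  exact ⟨h₃, h₄, h₁, h₂, by rwa [norm_sub_rev]⟩

lemma Admissible.one_sub {z w : ℂ} (h : Admissible z w) : Admissible (1 - z) (1 - w) := by
  obtain ⟨h₁, h₂, h₃, h₄, h₅⟩ := h
  refine ⟨by rwa [norm_sub_rev], ?_, by rwa [norm_sub_rev], ?_, ?_⟩
  · rwa [sub_sub_cancel_left, norm_neg]
  · rwa [sub_sub_cancel_left, norm_neg]
  · rwa [sub_sub_sub_cancel_left, norm_sub_rev]

lemma fiveDist_self_le {z : ℂ} (h₁ : ‖z‖ ≤ 1) (h₂ : ‖z - 1‖ ≤ 1) : fiveDist z z ≤ 4 := by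
  unfold fiveDist; rw [sub_self, norm_zero]; linarith

lemma four_le_three_add_two_mul_κ : 4 ≤ 3 + 2 * κ := by linarith [one_le_two_mul_κ]

lemma sq_norm_sub_eq (z w : ℂ) : ‖z - w‖ ^ 2 = (z.re - w.re) ^ 2 + (z.im - w.im) ^ 2 := by
  rw [Complex.sq_norm, Complex.normSq_apply, Complex.sub_re, Complex.sub_im]; ring

lemma sq_norm_eq (z : ℂ) : ‖z‖ ^ 2 = z.re ^ 2 + z.im ^ 2 := by
  simpa using sq_norm_sub_eq z 0

lemma re_sq_add_im_sq {z : ℂ} (hz : ‖z‖ = 1) : z.re ^ 2 + z.im ^ 2 = 1 := by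
  rw [← sq_norm_eq, hz, one_pow]

lemma fiveDist_le_of_norm_eq_one_of_norm_eq_one {z w : ℂ} (h : Admissible z w) (hz : ‖z‖ = 1)
    (hw : ‖w‖ = 1) : fiveDist z w ≤ 3 + 2 * κ := by
  obtain ⟨-, hz₁, -, hw₁, hzw⟩ := h
  have hp := re_sq_add_im_sq hz
  have hr := re_sq_add_im_sq hw
  have hx : ‖z - 1‖ ^ 2 = 2 - 2 * z.re := by
    rw [sq_norm_sub_eq]; simp only [Complex.one_re, Complex.one_im]; linear_combination hp
  have hy : ‖w - 1‖ ^ 2 = 2 - 2 * w.re := by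
    rw [sq_norm_sub_eq]; simp only [Complex.one_re, Complex.one_im]; linear_combination hr
  have hm : ‖z - w‖ ^ 2 = 2 - 2 * (z.re * w.re + z.im * w.im) := by
    rw [sq_norm_sub_eq]; linear_combination hp + hr
  have := add_add_le_of_inscribed (norm_nonneg _) (norm_nonneg _) (norm_nonneg _) hz₁ hw₁ hzw
    (by rw [hx, hy, hm]; linear_combination 4 * (w.im ^ 2 * hp + (1 - z.re ^ 2) * hr))
  unfold fiveDist; rw [hz, hw]; linarith

lemma fiveDist_le_of_norm_eq_one_of_norm_sub_eq_one {z w : ℂ} (h : Admissible z w)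
    (hz : ‖z‖ = 1) (hzw : ‖z - w‖ = 1) : fiveDist z w ≤ 3 + 2 * κ := by
  obtain ⟨-, hz₁, hw₀, hw₁, -⟩ := h
  have hp := re_sq_add_im_sq hz
  have hm : (z.re - w.re) ^ 2 + (z.im - w.im) ^ 2 = 1 := by rw [← sq_norm_sub_eq, hzw, one_pow]
  set g := z.re * (w.re - z.re) + z.im * (w.im - z.im)
  have := add_add_le_of_gram (a := z.re) (g := g) (w := w.re - z.re) (norm_nonneg _)
    (norm_nonneg _) (norm_nonneg _) hz₁ hw₀ hw₁
    (by linear_combination (w.im - z.im) ^ 2 * hp + (1 - z.re ^ 2) * hm)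
    (by rw [sq_norm_sub_eq]; simp only [Complex.one_re, Complex.one_im]; linear_combination hp)
    (by rw [sq_norm_eq]; linear_combination hp + hm)
    (by rw [sq_norm_sub_eq]; simp only [Complex.one_re, Complex.one_im]
        linear_combination hp + hm)
  unfold fiveDist; rw [hz, hzw]; linarith

lemma fiveDist_le_of_norm_eq_one_of_norm_sub_one_eq_one {z w : ℂ} (h : Admissible z w)
    (hz : ‖z‖ = 1) (hw : ‖w - 1‖ = 1) : fiveDist z w ≤ 3 + 2 * κ := by
  obtain ⟨-, hz₁, hw₀, -, hzw⟩ := h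
  have hp := re_sq_add_im_sq hz
  have hs : (w.re - 1) ^ 2 + w.im ^ 2 = 1 := by
    simpa [hw] using (sq_norm_sub_eq w 1).symm
  have := add_add_le_of_gram (a := z.re) (g := w.re - 1) (w := z.re * (w.re - 1) + z.im * w.im)
    (norm_nonneg _) (norm_nonneg _) (norm_nonneg _) hz₁ hw₀ hzw
    (by linear_combination w.im ^ 2 * hp + (1 - z.re ^ 2) * hs)
    (by rw [sq_norm_sub_eq]; simp only [Complex.one_re, Complex.one_im]; linear_combination hp)
    (by rw [sq_norm_eq]; linear_combination hs)
    (by rw [sq_norm_sub_eq]; linear_combination hp + hs)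
  unfold fiveDist; rw [hz, hw]; linarith

lemma convexOn_norm_add_mul (c d : ℂ) : ConvexOn ℝ univ fun t : ℝ => ‖c + t * d‖ := by
  refine ⟨convex_univ, fun x _ y _ a b ha hb hab => ?_⟩
  have hab' : (a : ℂ) + b = 1 := by exact_mod_cast hab
  calc ‖c + ((a • x + b • y : ℝ) : ℂ) * d‖ = ‖(a : ℂ) * (c + x * d) + (b : ℂ) * (c + y * d)‖ := by
        congr 1; push_cast [smul_eq_mul]; linear_combination (-c) * hab'
    _ ≤ a • ‖c + x * d‖ + b • ‖c + y * d‖ := by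
        refine (norm_add_le _ _).trans_eq ?_
        rw [norm_mul, norm_mul, Complex.norm_real, Complex.norm_real, Real.norm_of_nonneg ha,
          Real.norm_of_nonneg hb, smul_eq_mul, smul_eq_mul]

lemma convexOn_fiveDist_line (z w u v : ℂ) :
    ConvexOn ℝ univ fun t : ℝ => fiveDist (z + t * u) (w + t * v) := by
  have e : (fun t : ℝ => fiveDist (z + t * u) (w + t * v)) = fun t : ℝ =>
      ‖z + t * u‖ + ‖(z - 1) + t * u‖ + ‖w + t * v‖ + ‖(w - 1) + t * v‖
        + ‖(z - w) + t * (u - v)‖ := by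
    funext t; unfold fiveDist; ring_nf
  rw [e]
  exact ((((convexOn_norm_add_mul _ _).add (convexOn_norm_add_mul _ _)).add
    (convexOn_norm_add_mul _ _)).add (convexOn_norm_add_mul _ _)).add (convexOn_norm_add_mul _ _)

lemma max_max_eq_one {a b c : ℝ} (h : max (max a b) c = 1) :
    (a ≤ 1 ∧ b ≤ 1 ∧ c ≤ 1) ∧ (a = 1 ∨ b = 1 ∨ c = 1) := by
  refine ⟨by simpa only [max_le_iff, and_assoc] using h.le, ?_⟩
  rcases max_choice (max a b) c with h₁ | h₁ <;> rcases max_choice a b with h₂ | h₂ <;>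
    simp_all

lemma max_max_max_eq_one {a b c d : ℝ} (h : max (max a b) (max c d) = 1) :
    (a ≤ 1 ∧ b ≤ 1 ∧ c ≤ 1 ∧ d ≤ 1) ∧ (a = 1 ∨ b = 1 ∨ c = 1 ∨ d = 1) := by
  refine ⟨by simpa only [max_le_iff, and_assoc] using h.le, ?_⟩
  rcases max_choice (max a b) (max c d) with h₁ | h₁ <;> rcases max_choice a b with h₂ | h₂ <;>
    rcases max_choice c d with h₃ | h₃ <;> simp_all

lemma fiveDist_le_of_push {z w : ℂ} {C : ℝ} (h : Admissible z w) (hC : 4 ≤ C)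
    (hpush : ∀ z', Admissible z' w → ‖z'‖ = 1 ∨ ‖z' - 1‖ = 1 ∨ ‖z' - w‖ = 1 →
      fiveDist z' w ≤ C) :
    fiveDist z w ≤ C := by
  obtain ⟨hz, hz₁, hw, hw₁, hzw⟩ := h
  rcases eq_or_ne z w with rfl | hne
  · exact (fiveDist_self_le hw hw₁).trans hC
  have hd : 0 < ‖z - w‖ := norm_pos_iff.2 (sub_ne_zero.2 hne)
  set p : ℝ → ℂ := fun t => w + t * (z - w)
  have hpw : ∀ t, ‖p t - w‖ = |t| * ‖z - w‖ := fun t => by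
    simp [p, Complex.norm_real]
  set G : ℝ → ℝ := fun t => max (max ‖p t‖ ‖p t - 1‖) ‖p t - w‖
  obtain ⟨t, ⟨ht, -⟩, hGt⟩ : ∃ t ∈ Icc 1 ‖z - w‖⁻¹, G t = 1 := by
    refine intermediate_value_Icc ((one_le_inv₀ hd).2 hzw) (by fun_prop) ⟨?_, ?_⟩
    · simp [G, p, hz, hz₁, hzw]
    · refine le_max_of_le_right (le_of_eq ?_)
      rw [hpw, abs_of_pos (inv_pos.2 hd), inv_mul_cancel₀ hd.ne']
  obtain ⟨⟨hpt, hpt₁, hptw⟩, hcases⟩ := max_max_eq_one hGt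
  have hF : fiveDist z w ≤ max (fiveDist w w) (fiveDist (p t) w) := by
    have h₁ : (1 : ℝ) ∈ segment ℝ 0 t := by
      rw [segment_eq_Icc (by linarith)]; exact ⟨zero_le_one, ht⟩
    simpa [p] using (convexOn_fiveDist_line w w (z - w) 0).le_on_segment (mem_univ _)
      (mem_univ _) h₁
  exact hF.trans (max_le ((fiveDist_self_le hw hw₁).trans hC)
    (hpush _ ⟨hpt, hpt₁, hw, hw₁, hptw⟩ hcases))

lemma fiveDist_le_of_translate {z w : ℂ} {C : ℝ} (h : Admissible z w)
    (htr : ∀ t : ℝ, Admissible (z + t) (w + t) →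
      ‖z + t‖ = 1 ∨ ‖z + t - 1‖ = 1 ∨ ‖w + t‖ = 1 ∨ ‖w + t - 1‖ = 1 →
      fiveDist (z + t) (w + t) ≤ C) :
    fiveDist z w ≤ C := by
  obtain ⟨hz, hz₁, hw, hw₁, hzw⟩ := h
  set G : ℝ → ℝ := fun t => max (max ‖z + t‖ ‖z + t - 1‖) (max ‖w + t‖ ‖w + t - 1‖)
  have hG : Continuous G := by fun_prop
  have hG₀ : G 0 ≤ 1 := by simp [G, hz, hz₁, hw, hw₁]
  have hfar : ∀ t : ℝ, 2 ≤ |t| → 1 ≤ G t := fun t ht => by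
    refine le_max_of_le_left (le_max_of_le_left ?_)
    have := norm_sub_le (z + t) z
    rw [add_sub_cancel_left, Complex.norm_real, Real.norm_eq_abs] at this
    linarith
  obtain ⟨s, ⟨-, hs⟩, hGs⟩ : ∃ s ∈ Icc (-2 : ℝ) 0, G s = 1 :=
    intermediate_value_Icc' (by norm_num) hG.continuousOn ⟨hG₀, hfar _ (by norm_num)⟩
  obtain ⟨t, ⟨ht, -⟩, hGt⟩ : ∃ t ∈ Icc (0 : ℝ) 2, G t = 1 :=
    intermediate_value_Icc (by norm_num) hG.continuousOn ⟨hG₀, hfar _ (by norm_num)⟩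
  have hF : fiveDist z w ≤ max (fiveDist (z + s) (w + s)) (fiveDist (z + t) (w + t)) := by
    have h₀ : (0 : ℝ) ∈ segment ℝ s t := by rw [segment_eq_Icc (by linarith)]; exact ⟨hs, ht⟩
    simpa using (convexOn_fiveDist_line z w 1 1).le_on_segment (mem_univ _) (mem_univ _) h₀
  have hC : ∀ t, G t = 1 → fiveDist (z + t) (w + t) ≤ C := fun t hGt => by
    obtain ⟨⟨h₁, h₂, h₃, h₄⟩, hcases⟩ := max_max_max_eq_one hGt
    exact htr t ⟨h₁, h₂, h₃, h₄, by rwa [add_sub_add_right_eq_sub]⟩ hcases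
  exact hF.trans (max_le (hC s hGs) (hC t hGt))

lemma fiveDist_le_of_norm_eq_one {z w : ℂ} (h : Admissible z w) (hz : ‖z‖ = 1) :
    fiveDist z w ≤ 3 + 2 * κ := by
  rw [fiveDist_comm]
  refine fiveDist_le_of_push h.symm four_le_three_add_two_mul_κ fun w' hw' hcases => ?_
  rw [fiveDist_comm]
  rcases hcases with h₁ | h₁ | h₁
  · exact fiveDist_le_of_norm_eq_one_of_norm_eq_one hw'.symm hz h₁
  · exact fiveDist_le_of_norm_eq_one_of_norm_sub_one_eq_one hw'.symm hz h₁
  · exact fiveDist_le_of_norm_eq_one_of_norm_sub_eq_one hw'.symm hz (by rwa [norm_sub_rev])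

lemma fiveDist_le_of_norm_sub_eq_one {z w : ℂ} (h : Admissible z w) (hzw : ‖z - w‖ = 1) :
    fiveDist z w ≤ 3 + 2 * κ := by
  refine fiveDist_le_of_translate h fun t ht hcases => ?_
  have hzw' : ‖(z + t) - (w + t)‖ = 1 := by rwa [add_sub_add_right_eq_sub]
  rcases hcases with h₁ | h₁ | h₁ | h₁
  · exact fiveDist_le_of_norm_eq_one_of_norm_sub_eq_one ht h₁ hzw'
  · rw [← fiveDist_one_sub]
    exact fiveDist_le_of_norm_eq_one_of_norm_sub_eq_one ht.one_sub (by rwa [norm_sub_rev])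
      (by rwa [sub_sub_sub_cancel_left, norm_sub_rev])
  · rw [fiveDist_comm]
    exact fiveDist_le_of_norm_eq_one_of_norm_sub_eq_one ht.symm h₁ (by rwa [norm_sub_rev])
  · rw [fiveDist_comm, ← fiveDist_one_sub]
    exact fiveDist_le_of_norm_eq_one_of_norm_sub_eq_one ht.symm.one_sub (by rwa [norm_sub_rev])
      (by rwa [sub_sub_sub_cancel_left])

theorem fiveDist_le {z w : ℂ} (h : Admissible z w) : fiveDist z w ≤ 3 + 2 * κ := by
  refine fiveDist_le_of_push h four_le_three_add_two_mul_κ fun z' hz' hcases => ?_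
  rcases hcases with h₁ | h₁ | h₁
  · exact fiveDist_le_of_norm_eq_one hz' h₁
  · rw [← fiveDist_one_sub]
    exact fiveDist_le_of_norm_eq_one hz'.one_sub (by rwa [norm_sub_rev])
  · exact fiveDist_le_of_norm_sub_eq_one hz' h₁

lemma sum_filter_lt_fin_four (f : Fin 4 → Fin 4 → ℝ) :
    ∑ p ∈ Finset.univ.filter (fun p : Fin 4 × Fin 4 => p.1 < p.2), f p.1 p.2 =
      f 0 1 + f 0 2 + f 0 3 + f 1 2 + f 1 3 + f 2 3 := by
  simp [Finset.sum_filter, Fintype.sum_prod_type, Fin.sum_univ_four]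
  ring

lemma sum_filter_lt_fin_four_perm {f : Fin 4 → Fin 4 → ℝ} (hf : ∀ i j, f i j = f j i)
    (σ : Equiv.Perm (Fin 4)) :
    ∑ p ∈ Finset.univ.filter (fun p : Fin 4 × Fin 4 => p.1 < p.2), f (σ p.1) (σ p.2) =
      ∑ p ∈ Finset.univ.filter (fun p : Fin 4 × Fin 4 => p.1 < p.2), f p.1 p.2 := by
  have two_mul_sum : ∀ g : Fin 4 → Fin 4 → ℝ, (∀ i j, g i j = g j i) →
      2 * ∑ p ∈ Finset.univ.filter (fun p : Fin 4 × Fin 4 => p.1 < p.2), g p.1 p.2 =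
        ∑ i, ∑ j, g i j - ∑ i, g i i := fun g hg => by
    rw [sum_filter_lt_fin_four]
    simp only [Fin.sum_univ_four]
    linarith [hg 0 1, hg 0 2, hg 0 3, hg 1 2, hg 1 3, hg 2 3]
  have h₁ := two_mul_sum (fun i j => f (σ i) (σ j)) fun i j => hf _ _
  have h₂ := two_mul_sum f hf
  rw [Equiv.sum_comp σ (fun i => ∑ j, f i (σ j)), Equiv.sum_comp σ (fun i => f i i)] at h₁
  simp only [Equiv.sum_comp σ (f _)] at h₁
  linarith

lemma exists_perm_fin_four {i j : Fin 4} (hij : i ≠ j) :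
    ∃ σ : Equiv.Perm (Fin 4), σ 0 = i ∧ σ 1 = j := by
  revert i j; decide

lemma sum_dist_le_of_dist_zero_one {A : Fin 4 → ℂ} {D : ℝ} (hD : ∀ i j, dist (A i) (A j) ≤ D)
    (hD₀ : 0 < D) (h₀₁ : dist (A 0) (A 1) = D) :
    ∑ p ∈ Finset.univ.filter (fun p : Fin 4 × Fin 4 => p.1 < p.2), dist (A p.1) (A p.2) ≤
      (4 + 2 * κ) * D := by
  set u := A 1 - A 0
  have hu : ‖u‖ = D := by rw [← h₀₁, dist_comm, dist_eq_norm]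
  set N : Fin 4 → ℂ := fun i => (A i - A 0) / u
  have hN : ∀ i j, dist (A i) (A j) = D * ‖N i - N j‖ := fun i j => by
    rw [dist_eq_norm, ← sub_div, sub_sub_sub_cancel_right, norm_div, hu,
      mul_div_cancel₀ _ hD₀.ne']
  have hN₀ : N 0 = 0 := by simp [N]
  have hN₁ : N 1 = 1 := div_self (norm_ne_zero_iff.1 (hu ▸ hD₀.ne'))
  have hle : ∀ i j, ‖N i - N j‖ ≤ 1 := fun i j =>
    (mul_le_iff_le_one_right hD₀).1 (hN i j ▸ hD i j)
  have hadm : Admissible (N 2) (N 3) :=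
    ⟨by simpa [hN₀] using hle 2 0, by simpa [hN₁] using hle 2 1, by simpa [hN₀] using hle 3 0,
      by simpa [hN₁] using hle 3 1, hle 2 3⟩
  calc _ = D * (1 + fiveDist (N 2) (N 3)) := by
        rw [sum_filter_lt_fin_four fun i j => dist (A i) (A j)]
        simp only [hN, hN₀, hN₁, fiveDist, zero_sub, norm_neg, norm_one,
          norm_sub_rev (1 : ℂ)]
        ring
    _ ≤ D * (1 + (3 + 2 * κ)) := by gcongr; exact fiveDist_le hadm
    _ = (4 + 2 * κ) * D := by ring

theorem sum_dist_le {A : Fin 4 → ℂ} {D : ℝ} (hD : ∀ i j, dist (A i) (A j) ≤ D) (hD₀ : 0 < D)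
    {i j : Fin 4} (hij : i ≠ j) (hDij : dist (A i) (A j) = D) :
    ∑ p ∈ Finset.univ.filter (fun p : Fin 4 × Fin 4 => p.1 < p.2), dist (A p.1) (A p.2) ≤
      (4 + 2 * κ) * D := by
  obtain ⟨σ, rfl, rfl⟩ := exists_perm_fin_four hij
  rw [← sum_filter_lt_fin_four_perm (f := fun i j => dist (A i) (A j)) (fun _ _ => dist_comm _ _) σ]
  exact sum_dist_le_of_dist_zero_one (A := A ∘ σ) (fun _ _ => hD _ _) hD₀ hDij

noncomputable def extremalConfig : Fin 4 → ℂ := ![0, 1, ⟨1 / 2, √3 / 2⟩, ⟨1 / 2, √3 / 2 - 1⟩]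

lemma dist_extremalConfig :
    dist (extremalConfig 0) (extremalConfig 1) = 1 ∧
      dist (extremalConfig 0) (extremalConfig 2) = 1 ∧
      dist (extremalConfig 0) (extremalConfig 3) = κ ∧
      dist (extremalConfig 1) (extremalConfig 2) = 1 ∧
      dist (extremalConfig 1) (extremalConfig 3) = κ ∧
      dist (extremalConfig 2) (extremalConfig 3) = 1 := by
  simp [extremalConfig, Complex.dist_eq_re_im, κ]
  refine ⟨?_, congrArg sqrt ?_, ?_, congrArg sqrt ?_⟩ <;> linear_combination sqrt_three_sq / 4

lemma dist_extremalConfig_le (i j : Fin 4) : dist (extremalConfig i) (extremalConfig j) ≤ 1 := by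
  obtain ⟨d₀₁, d₀₂, d₀₃, d₁₂, d₁₃, d₂₃⟩ := dist_extremalConfig
  fin_cases i <;> fin_cases j <;>
    simp [d₀₁, d₀₂, d₀₃, d₁₂, d₁₃, d₂₃, dist_comm (extremalConfig 1) (extremalConfig 0),
      dist_comm (extremalConfig 2), dist_comm (extremalConfig 3), κ_le_one]

lemma sum_dist_extremalConfig :
    ∑ p ∈ Finset.univ.filter (fun p : Fin 4 × Fin 4 => p.1 < p.2),
      dist (extremalConfig p.1) (extremalConfig p.2) = 4 + 2 * κ := by
  obtain ⟨d₀₁, d₀₂, d₀₃, d₁₂, d₁₃, d₂₃⟩ := dist_extremalConfig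
  rw [sum_filter_lt_fin_four fun i j => dist (extremalConfig i) (extremalConfig j), d₀₁, d₀₂, d₀₃,
    d₁₂, d₁₃, d₂₃]
  ring

lemma forall_dist_le_of_forall_lt {ι P : Type*} [LinearOrder ι] [PseudoMetricSpace P]
    {A : ι → P} {D : ℝ} (hD : 0 ≤ D) (h : ∀ i j, i < j → dist (A i) (A j) ≤ D) (i j : ι) :
    dist (A i) (A j) ≤ D := by
  rcases lt_trichotomy i j with hij | rfl | hij
  · exact h i j hij
  · simpa using hD
  · rw [dist_comm]; exact h j i hij

end PlanarFourPoints

open PlanarFourPoints in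
theorem stmt7 :
    IsGreatest {r : ℝ | ∃ (A : Fin 4 → EuclideanSpace ℝ (Fin 2)) (D : ℝ),
        IsGreatest {d : ℝ | ∃ i j : Fin 4, i < j ∧ d = dist (A i) (A j)} D ∧
        0 < D ∧
        r = (∑ p ∈ Finset.univ.filter (fun p : Fin 4 × Fin 4 => p.1 < p.2),
              dist (A p.1) (A p.2)) / D}
      (4 + 2 * Real.sqrt (2 - Real.sqrt 3)) := by
  set e := Complex.orthonormalBasisOneI.repr
  refine ⟨⟨fun i => e (extremalConfig i), 1, ⟨⟨0, 1, by decide, ?_⟩, ?_⟩, one_pos, ?_⟩, ?_⟩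
  · simp [dist_extremalConfig.1]
  · rintro d ⟨i, j, -, rfl⟩
    simpa using dist_extremalConfig_le i j
  · simpa [κ] using sum_dist_extremalConfig.symm
  · rintro r ⟨A, D, ⟨⟨i, j, hij, hDij⟩, hD⟩, hD₀, rfl⟩
    have hle := forall_dist_le_of_forall_lt hD₀.le fun i j hij => hD ⟨i, j, hij, rfl⟩
    rw [div_le_iff₀ hD₀]
    simpa [κ] using sum_dist_le (A := fun k => e.symm (A k)) (by simpa using hle) hD₀ hij.ne
      (by simpa using hDij.symm)
end

section
/- Let A₁ = (0,0), A₂ = (1,0), A₃ = (1/2, √3/2) (an equilateral triangle of side 1), and let A₄ = (x,y) lie in the region Ω = {(x,y) : y + √3·x − √3 ≥ 0, x² + y² ≤ 1}. Then ‖A₃A₄‖ + ‖A₂A₄‖ ≤ 2√(2−√3), with equality when A₄ = (cos π/6, sin π/6) = (√3/2, 1/2), i.e., the midpoint of the arc. -/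
set_option maxHeartbeats 1600000

theorem stmt8 (x y : ℝ)
    (hΩ : y + Real.sqrt 3 * x - Real.sqrt 3 ≥ 0 ∧ x ^ 2 + y ^ 2 ≤ 1) :
    Real.sqrt ((x - 1 / 2) ^ 2 + (y - Real.sqrt 3 / 2) ^ 2) +
        Real.sqrt ((x - 1) ^ 2 + y ^ 2) ≤ 2 * Real.sqrt (2 - Real.sqrt 3) ∧
      Real.sqrt ((Real.sqrt 3 / 2 - 1 / 2) ^ 2 + (1 / 2 - Real.sqrt 3 / 2) ^ 2) +
        Real.sqrt ((Real.sqrt 3 / 2 - 1) ^ 2 + (1 / 2) ^ 2) =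
          2 * Real.sqrt (2 - Real.sqrt 3) := by
  obtain ⟨h1, h2⟩ := hΩ
  have hs2 : (Real.sqrt 3) ^ 2 = 3 := Real.sq_sqrt (by norm_num)
  have hs0 : (0:ℝ) ≤ Real.sqrt 3 := Real.sqrt_nonneg 3
  set s := Real.sqrt 3 with hs_def
  clear_value s
  have hs_lt : s ≤ 7/4 := by nlinarith
  have hs_gt : 1 ≤ s := by nlinarith
  constructor
  · set a := (x - 1/2)^2 + (y - s/2)^2 with ha_def
    set b := (x - 1)^2 + y^2 with hb_def
    have ha0 : 0 ≤ a := by positivity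
    have hb0 : 0 ≤ b := by positivity
    have hM : 2 * Real.sqrt (2 - s) = Real.sqrt (8 - 4*s) := by
      rw [show (8:ℝ) - 4*s = 2^2*(2-s) by ring,
        Real.sqrt_mul (by positivity), Real.sqrt_sq (by norm_num)]
    set p := (s*x + y)/2 with hp_def
    set q := (-x + s*y)/2 with hq_def
    have hp : s/2 ≤ p := by rw [hp_def]; linarith
    have hpq0 : p^2 + q^2 = x^2 + y^2 := by
      rw [hp_def, hq_def]; linear_combination ((x^2 + y^2)/4) * hs2
    have hpq : p^2 + q^2 ≤ 1 := by rw [hpq0]; exact h2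
    have hp1 : p ≤ 1 := by nlinarith [hpq, sq_nonneg q, hp, hs_gt, sq_nonneg (p-1)]
    have hap : a = (p - s/2)^2 + (q - 1/2)^2 := by
      rw [ha_def, hp_def, hq_def]; linear_combination ((2*x - x^2 - y^2)/4) * hs2
    have hbp : b = (p - s/2)^2 + (q + 1/2)^2 := by
      rw [hb_def, hp_def, hq_def]; linear_combination (-((x-1)^2 + y^2)/4) * hs2
    clear_value a b p q
    have hps : (0:ℝ) ≤ p - s/2 := by linarith
    have hS : a + b ≤ 8 - 4*s := by
      rw [hap, hbp]
      nlinarith [hpq, mul_nonneg hs0 hps, hs_lt, hs2]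
    have h2s : (0:ℝ) < 2 - s := by linarith
    have hq2 : q^2 ≤ 1 - p^2 := by linarith
    have hK1 : (0:ℝ) ≤ 7 - 4*s := by linarith
    have hg : 4*(8-4*s)*(p-s/2)^2 ≤ (7-4*s)*((8-4*s)-4*(1-p^2)) := by
      have hA : (0:ℝ) ≤ (7-4*s)^2*(1-p) :=
        mul_nonneg (sq_nonneg _) (by linarith)
      have hB : (0:ℝ) ≤ (2-s)*((p-s/2)*(1-p)) :=
        mul_nonneg (by linarith) (mul_nonneg hps (by linarith))
      have hident : (2-s)*((7-4*s)*((8-4*s)-4*(1-p^2)) - 4*(8-4*s)*(p-s/2)^2)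
          = 2*((7-4*s)^2*(1-p)) + 4*((2-s)*((p-s/2)*(1-p))) := by
        linear_combination (-4*s^2 + 16*s*p + 14 - 30*p) * hs2
      have h0 : (0:ℝ) ≤ (2-s)*((7-4*s)*((8-4*s)-4*(1-p^2)) - 4*(8-4*s)*(p-s/2)^2) := by
        rw [hident]; linarith
      have := (mul_nonneg_iff_of_pos_left h2s).mp h0
      linarith
    have hmono : (7-4*s)*((8-4*s)-4*(1-p^2)) ≤ (7-4*s)*((8-4*s)-4*q^2) :=
      mul_le_mul_of_nonneg_left (by linarith) hK1
    have hkey : 4*(a*b) ≤ ((8 - 4*s) - (a+b))^2 := by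
      have hid : ((8-4*s) - (a+b))^2 - 4*(a*b)
          = (7-4*s)*((8-4*s)-4*q^2) - 4*(8-4*s)*(p-s/2)^2 := by
        rw [hap, hbp]; ring
      linarith
    have hab : Real.sqrt a * Real.sqrt b ≤ ((8 - 4*s) - (a+b))/2 := by
      rw [← Real.sqrt_mul ha0]
      have h7 : a * b ≤ (((8 - 4*s) - (a+b))/2)^2 := by nlinarith [hkey]
      calc Real.sqrt (a*b) ≤ Real.sqrt ((((8 - 4*s) - (a+b))/2)^2) := Real.sqrt_le_sqrt h7
        _ = ((8 - 4*s) - (a+b))/2 := Real.sqrt_sq (by linarith)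
    have h6 : (Real.sqrt a + Real.sqrt b)^2 ≤ 8 - 4*s := by
      have e1 := Real.sq_sqrt ha0
      have e2 := Real.sq_sqrt hb0
      nlinarith [hab]
    have h8 : Real.sqrt a + Real.sqrt b ≤ Real.sqrt (8 - 4*s) := by
      have := Real.sqrt_le_sqrt h6
      rwa [Real.sqrt_sq (by positivity)] at this
    rw [hM]; exact h8
  · have e1 : (s/2 - 1/2)^2 + (1/2 - s/2)^2 = 2 - s := by linear_combination hs2/2
    have e2 : (s/2 - 1)^2 + (1/2:ℝ)^2 = 2 - s := by linear_combination hs2/4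
    rw [show (s / 2 - 1 / 2) ^ 2 + (1 / 2 - s / 2) ^ 2 = 2 - s from e1,
        show (s / 2 - 1) ^ 2 + (1/2:ℝ) ^ 2 = 2 - s from e2]
    ring
end

section
/- For every n ≥ 2 there exist n+2 points A₁,…,A_{n+2} in ℝⁿ with maximum pairwise distance D(S) = 1 such that the sum of all pairwise distances equals C(n+1,2) + 1 + n·√(2(1 − √((n+1)/(2n)))). Consequently sup ω(n, n+2) ≥ C(n+1,2) + 1 + n·√(2(1 − √((n+1)/(2n)))). -/
/-!
Take the face vertices `e_j / √2` of a unit regular simplex; their centroid `G` is at distance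
`√((n - 1) / (2n))` from each of them, and the face is orthogonal to the all-ones vector `𝟙`.
By Pythagoras, the point at signed distance `s` from `G` along `𝟙` is at distance
`√(s² + (n - 1) / (2n))` from every face vertex. With `h = √((n + 1) / (2n))`, the point `s = h`
completes the regular simplex, and the point `s = h - 1` is the one at distance `1` from it towards
`G`; its distance to each face vertex is `√((1 - h)² + 1 - h²) = √(2 (1 - h)) ≤ 1`. All other
distances equal `1`.
-/

open Finset Real

theorem Fin.sum_filter_lt_succ {M : Type*} [AddCommMonoid M] {m : ℕ}
    (f : Fin (m + 1) → Fin (m + 1) → M) :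
    ∑ p ∈ univ.filter (fun p : Fin (m + 1) × Fin (m + 1) => p.1 < p.2), f p.1 p.2 =
      ∑ p ∈ univ.filter (fun p : Fin m × Fin m => p.1 < p.2), f p.1.castSucc p.2.castSucc +
        ∑ i : Fin m, f i.castSucc (Fin.last m) := by
  simp only [sum_filter, Fintype.sum_prod_type_right, Fin.sum_univ_castSucc,
    Fin.castSucc_lt_castSucc_iff, Fin.castSucc_lt_last, not_lt_of_ge (Fin.le_last _), if_true,
    if_false, add_zero]

namespace EuclideanSpace

variable {n : ℕ}

theorem dist_const_single (a b : ℝ) (j : Fin n) :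
    dist (WithLp.toLp 2 (fun _ => a) : EuclideanSpace ℝ (Fin n)) (single j b) =
      √(n * a ^ 2 - 2 * a * b + b ^ 2) := by
  have h (k : Fin n) : (a - if k = j then b else 0) ^ 2 =
      a ^ 2 - if k = j then 2 * a * b - b ^ 2 else 0 := by
    split_ifs <;> ring
  rw [dist_eq]
  congr 1
  simp only [PiLp.single_apply, Real.dist_eq, sq_abs, h, sum_sub_distrib, sum_const, card_univ,
    Fintype.card_fin, nsmul_eq_mul, sum_ite_eq', mem_univ, if_true]
  ring

theorem dist_single_single_of_ne {i j : Fin n} (hij : i ≠ j) (b : ℝ) :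
    dist (single i b : EuclideanSpace ℝ (Fin n)) (single j b) = √2 * |b| := by
  have h (k : Fin n) : ((if k = i then b else 0) - if k = j then b else 0) ^ 2 =
      (if k = i then b ^ 2 else 0) + if k = j then b ^ 2 else 0 := by
    split_ifs with hi hj <;> first | exact absurd (hi.symm.trans hj) hij | ring
  simp only [dist_eq, PiLp.single_apply, Real.dist_eq, sq_abs, h, sum_add_distrib, sum_ite_eq',
    mem_univ, if_true]
  rw [← two_mul, Real.sqrt_mul zero_le_two, Real.sqrt_sq_eq_abs]

theorem dist_const_const (a b : ℝ) :
    dist (WithLp.toLp 2 (fun _ => a) : EuclideanSpace ℝ (Fin n)) (WithLp.toLp 2 (fun _ => b)) =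
      √n * |a - b| := by
  simp [EuclideanSpace.dist_eq, Real.dist_eq, sq_abs, Real.sqrt_mul (Nat.cast_nonneg n),
    Real.sqrt_sq_eq_abs]

end EuclideanSpace

namespace UnitSimplex

variable {n : ℕ}

noncomputable def faceVertex (j : Fin n) : EuclideanSpace ℝ (Fin n) :=
  EuclideanSpace.single j (√2)⁻¹

/-- The point at signed distance `s` from the centroid `(n √2)⁻¹ • 𝟙` of the face vertices, along
the unit normal `(√n)⁻¹ • 𝟙` of the face. -/
noncomputable def axisPoint (n : ℕ) (s : ℝ) : EuclideanSpace ℝ (Fin n) :=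
  WithLp.toLp 2 fun _ => (n * √2)⁻¹ + s / √n

noncomputable def height (n : ℕ) : ℝ := √((n + 1) / (2 * n))

theorem dist_faceVertex_of_ne {i j : Fin n} (hij : i ≠ j) :
    dist (faceVertex i) (faceVertex j) = 1 := by
  rw [faceVertex, faceVertex, EuclideanSpace.dist_single_single_of_ne hij,
    abs_of_pos (by positivity), mul_inv_cancel₀ (by positivity)]

theorem dist_axisPoint_faceVertex (hn : n ≠ 0) (s : ℝ) (j : Fin n) :
    dist (axisPoint n s) (faceVertex j) = √(s ^ 2 + (n - 1) / (2 * n)) := by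
  rw [axisPoint, faceVertex, EuclideanSpace.dist_const_single]
  congr 1
  have h2 : √2 ^ 2 = 2 := sq_sqrt zero_le_two
  have hn' : √n ^ 2 = n := sq_sqrt (Nat.cast_nonneg n)
  field_simp
  linear_combination
    (2 * n ^ 2 * s ^ 2 - √n ^ 2 * (2 * n * s ^ 2 + n - 1)) * h2 - 4 * n * s ^ 2 * hn'

theorem dist_axisPoint_axisPoint (hn : n ≠ 0) (s t : ℝ) :
    dist (axisPoint n s) (axisPoint n t) = |s - t| := by
  rw [axisPoint, axisPoint, EuclideanSpace.dist_const_const, add_sub_add_left_eq_sub, ← sub_div,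
    abs_div, abs_of_pos (by positivity : 0 < √n), mul_div_cancel₀ _ (by positivity)]

theorem height_sq_add (hn : n ≠ 0) : height n ^ 2 + (n - 1) / (2 * n) = 1 := by
  rw [height, sq_sqrt (by positivity)]
  field_simp
  ring

theorem half_le_height (hn : n ≠ 0) : 1 / 2 ≤ height n := by
  rw [height, Real.le_sqrt (by norm_num) (by positivity), le_div_iff₀ (by positivity)]
  linarith [(Nat.cast_nonneg n : (0 : ℝ) ≤ n)]

noncomputable def apex (n : ℕ) : EuclideanSpace ℝ (Fin n) := axisPoint n (height n)

noncomputable def rayPoint (n : ℕ) : EuclideanSpace ℝ (Fin n) := axisPoint n (height n - 1)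

noncomputable def vertex (n : ℕ) : Fin (n + 1) → EuclideanSpace ℝ (Fin n) :=
  Fin.cons (apex n) faceVertex

noncomputable def vertexWithRayPoint (n : ℕ) : Fin (n + 2) → EuclideanSpace ℝ (Fin n) :=
  Fin.snoc (vertex n) (rayPoint n)

theorem dist_apex_faceVertex (hn : n ≠ 0) (j : Fin n) : dist (apex n) (faceVertex j) = 1 := by
  rw [apex, dist_axisPoint_faceVertex hn, height_sq_add hn, sqrt_one]

theorem dist_vertex_of_ne (hn : n ≠ 0) {i j : Fin (n + 1)} (hij : i ≠ j) :
    dist (vertex n i) (vertex n j) = 1 := by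
  cases i using Fin.cases <;> cases j using Fin.cases
  · exact absurd rfl hij
  · exact dist_apex_faceVertex hn _
  · rw [dist_comm]; exact dist_apex_faceVertex hn _
  · exact dist_faceVertex_of_ne (fun h => hij (congrArg Fin.succ h))

theorem dist_apex_rayPoint (hn : n ≠ 0) : dist (apex n) (rayPoint n) = 1 := by
  rw [apex, rayPoint, dist_axisPoint_axisPoint hn, sub_sub_cancel, abs_one]

theorem dist_faceVertex_rayPoint (hn : n ≠ 0) (j : Fin n) :
    dist (faceVertex j) (rayPoint n) = √(2 * (1 - height n)) := by
  rw [dist_comm, rayPoint, dist_axisPoint_faceVertex hn]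
  congr 1
  linear_combination height_sq_add hn

theorem dist_vertex_rayPoint_le_one (hn : n ≠ 0) (i : Fin (n + 1)) :
    dist (vertex n i) (rayPoint n) ≤ 1 := by
  cases i using Fin.cases
  · exact (dist_apex_rayPoint hn).le
  · rw [vertex, Fin.cons_succ, dist_faceVertex_rayPoint hn]
    exact sqrt_le_one.2 (by linarith [half_le_height hn])

theorem dist_vertexWithRayPoint_le_one (hn : n ≠ 0) (i j : Fin (n + 2)) :
    dist (vertexWithRayPoint n i) (vertexWithRayPoint n j) ≤ 1 := by
  cases i using Fin.lastCases <;> cases j using Fin.lastCases <;>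
    simp only [vertexWithRayPoint, Fin.snoc_last, Fin.snoc_castSucc]
  · simp
  · rw [dist_comm]; exact dist_vertex_rayPoint_le_one hn _
  · exact dist_vertex_rayPoint_le_one hn _
  · rename_i i j
    obtain rfl | hij := eq_or_ne i j
    · simp
    · exact (dist_vertex_of_ne hn hij).le

end UnitSimplex

open UnitSimplex

theorem stmt14 (n : ℕ) (hn : 2 ≤ n) :
    ∃ A : Fin (n + 2) → EuclideanSpace ℝ (Fin n),
      IsGreatest {d : ℝ | ∃ i j : Fin (n + 2), i < j ∧ d = dist (A i) (A j)} 1 ∧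
      ∑ p ∈ Finset.univ.filter (fun p : Fin (n + 2) × Fin (n + 2) => p.1 < p.2),
          dist (A p.1) (A p.2) =
        ((n + 1).choose 2 : ℝ) + 1 +
          n * Real.sqrt (2 * (1 - Real.sqrt ((n + 1) / (2 * n)))) := by
  have hn0 : n ≠ 0 := by omega
  refine ⟨vertexWithRayPoint n, ⟨⟨0, Fin.last _, Fin.last_pos, ?_⟩, ?_⟩, ?_⟩
  · rw [← Fin.castSucc_zero, vertexWithRayPoint, Fin.snoc_castSucc, Fin.snoc_last, vertex,
      Fin.cons_zero, dist_apex_rayPoint hn0]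
  · rintro d ⟨i, j, -, rfl⟩
    exact dist_vertexWithRayPoint_le_one hn0 i j
  · rw [Fin.sum_filter_lt_succ fun i j => dist (vertexWithRayPoint n i) (vertexWithRayPoint n j)]
    simp only [vertexWithRayPoint, Fin.snoc_castSucc, Fin.snoc_last]
    rw [sum_congr rfl fun p hp => dist_vertex_of_ne hn0 (mem_filter.1 hp).2.ne, sum_const,
      Fintype.card_product_filter_lt, Fintype.card_fin, Fin.sum_univ_succ]
    simp only [vertex, Fin.cons_zero, Fin.cons_succ, dist_apex_rayPoint hn0,
      dist_faceVertex_rayPoint hn0, sum_const, card_univ, Fintype.card_fin, nsmul_eq_mul, height]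
    ring
end

section
/- Let A₁,…,A_{n+1} be the vertices of a regular n-simplex with unit side length in ℝⁿ, and let A_{n+2} be the point on the ray from A₁ through the centroid of the opposite face {A₂,…,A_{n+1}}, at distance 1 from A₁. Then for each i ∈ {2,…,n+1}, ‖A_iA_{n+2}‖ = √(2(1 − √((n+1)/(2n)))). -/
/-!
Put `v i = A i - A 0`. These are unit vectors with pairwise inner products `1/2`, so their
mean `w`, the centroid of the opposite face minus `A 0`, satisfies `⟪v i, w⟫ = ‖w‖² = (n + 1) / (2n)`. Since `B - A 0 = t • w`
with `t ‖w‖ = 1`, expanding `‖v i - t • w‖²` gives `1 - 2 t ‖w‖² + 1 = 2 (1 - ‖w‖)`.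
-/

open Finset
open scoped RealInnerProductSpace

variable {ι E : Type*} [NormedAddCommGroup E] [InnerProductSpace ℝ E]

theorem inner_sub_sub_of_dist_eq_one {a b o : E} (ha : dist a o = 1) (hb : dist b o = 1)
    (hab : dist a b = 1) : ⟪a - o, b - o⟫ = 1 / 2 := by
  have h := norm_sub_sq_real (a - o) (b - o)
  rw [sub_sub_sub_cancel_right, ← dist_eq_norm, ← dist_eq_norm, ← dist_eq_norm, ha, hb, hab] at h
  linarith

theorem inv_card_smul_sum_sub {s : Finset ι} (hs : s.Nonempty) (p : ι → E) (o : E) :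
    ((#s : ℝ)⁻¹ • ∑ i ∈ s, p i) - o = (#s : ℝ)⁻¹ • ∑ i ∈ s, (p i - o) := by
  have hs0 : (#s : ℝ) ≠ 0 := by exact_mod_cast hs.card_ne_zero
  rw [sum_sub_distrib, sum_const, ← Nat.cast_smul_eq_nsmul ℝ, smul_sub, smul_smul,
    inv_mul_cancel₀ hs0, one_smul]

section UnitVectorsAtSixtyDegrees

variable {s : Finset ι} {v : ι → E} (hnorm : ∀ i ∈ s, ‖v i‖ = 1)
  (hinner : ∀ i ∈ s, ∀ j ∈ s, i ≠ j → ⟪v i, v j⟫ = 1 / 2)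
include hnorm hinner

theorem inner_sum_of_inner_eq_half {i : ι} (hi : i ∈ s) :
    ⟪v i, ∑ j ∈ s, v j⟫ = (#s + 1) / 2 := by
  classical
  have hgram : ∀ j ∈ s, ⟪v i, v j⟫ = 1 / 2 + if i = j then 1 / 2 else 0 := by
    intro j hj
    by_cases hij : i = j
    · subst hij
      rw [real_inner_self_eq_norm_sq, hnorm i hi]
      norm_num
    · rw [hinner i hi j hj hij, if_neg hij, add_zero]
  rw [inner_sum, sum_congr rfl hgram, sum_add_distrib, sum_const, sum_ite_eq, if_pos hi,
    nsmul_eq_mul]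
  ring

theorem inner_inv_card_smul_sum {i : ι} (hi : i ∈ s) :
    ⟪v i, (#s : ℝ)⁻¹ • ∑ j ∈ s, v j⟫ = (#s + 1) / (2 * #s) := by
  rw [inner_smul_right, inner_sum_of_inner_eq_half hnorm hinner hi]
  ring

theorem norm_inv_card_smul_sum_sq :
    ‖(#s : ℝ)⁻¹ • ∑ j ∈ s, v j‖ ^ 2 = (#s + 1) / (2 * #s) := by
  rw [← real_inner_self_eq_norm_sq, real_inner_smul_left, sum_inner,
    sum_congr rfl fun j hj => inner_inv_card_smul_sum hnorm hinner hj, sum_const, nsmul_eq_mul]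
  rcases eq_or_ne (#s : ℝ) 0 with hs | hs
  · simp [hs]
  · field_simp

end UnitVectorsAtSixtyDegrees

theorem norm_sub_smul_of_inner_eq_norm_sq {u w : E} {t : ℝ} (hu : ‖u‖ = 1)
    (huw : ⟪u, w⟫ = ‖w‖ ^ 2) (ht : 0 ≤ t) (htw : ‖t • w‖ = 1) :
    ‖u - t • w‖ = √(2 * (1 - ‖w‖)) := by
  rw [norm_smul, Real.norm_of_nonneg ht] at htw
  rw [← Real.sqrt_sq (norm_nonneg _), norm_sub_sq_real, real_inner_smul_right, huw, hu,
    norm_smul, Real.norm_of_nonneg ht]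
  congr 1
  linear_combination (t * ‖w‖ + 1 - 2 * ‖w‖) * htw

theorem stmt15 (n : ℕ) (hn : 2 ≤ n)
    (A : Fin (n + 1) → EuclideanSpace ℝ (Fin n))
    (B : EuclideanSpace ℝ (Fin n))
    (hreg : ∀ i j : Fin (n + 1), i ≠ j → dist (A i) (A j) = 1)
    (hray : ∃ t : ℝ, 0 ≤ t ∧
      B = A 0 + t • (((n : ℝ)⁻¹ • ∑ i ∈ Finset.univ.erase 0, A i) - A 0))
    (hdist : dist (A 0) B = 1) :
    ∀ i : Fin (n + 1), i ≠ 0 →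
      dist (A i) B = Real.sqrt (2 * (1 - Real.sqrt ((n + 1) / (2 * n)))) := by
  intro i hi
  obtain ⟨t, ht, hB⟩ := hray
  set s : Finset (Fin (n + 1)) := univ.erase 0
  have hs : #s = n := by simp [s]
  have hs_ne : s.Nonempty := card_pos.1 (by omega)
  have hnorm : ∀ j ∈ s, ‖A j - A 0‖ = 1 := fun j hj =>
    (dist_eq_norm _ _).symm.trans (hreg j 0 (ne_of_mem_erase hj))
  have hinner : ∀ j ∈ s, ∀ k ∈ s, j ≠ k → ⟪A j - A 0, A k - A 0⟫ = 1 / 2 :=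
    fun j hj k hk hjk => inner_sub_sub_of_dist_eq_one (hreg j 0 (ne_of_mem_erase hj))
      (hreg k 0 (ne_of_mem_erase hk)) (hreg j k hjk)
  have his : i ∈ s := mem_erase.2 ⟨hi, mem_univ i⟩
  set w := (#s : ℝ)⁻¹ • ∑ j ∈ s, (A j - A 0)
  have hBw : B - A 0 = t • w := by
    rw [hB, add_sub_cancel_left, show (n : ℝ) = #s by rw [hs], inv_card_smul_sum_sub hs_ne]
  have hw : ‖w‖ = √((n + 1) / (2 * n)) := by
    rw [← Real.sqrt_sq (norm_nonneg w), norm_inv_card_smul_sum_sq hnorm hinner, hs]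
  have huw : ⟪A i - A 0, w⟫ = ‖w‖ ^ 2 := by
    rw [inner_inv_card_smul_sum hnorm hinner his, norm_inv_card_smul_sum_sq hnorm hinner]
  have htw : ‖t • w‖ = 1 := by rw [← hBw, ← dist_eq_norm, dist_comm, hdist]
  rw [dist_eq_norm, ← sub_sub_sub_cancel_right (A i) B (A 0), hBw,
    norm_sub_smul_of_inner_eq_norm_sq (hnorm i his) huw ht htw, hw]
end

section
/- Let A₂ = (1,0) and A₃ = (1/2, √3/2), and let (x,y) satisfy x² + y² = 1, 1/2 ≤ x ≤ 1, 0 ≤ y ≤ √3/2. Then f(x,y) = ‖(x,y)−A₃‖ + ‖(x,y)−A₂‖ attains its maximum exactly at the point (cos(π/6), sin(π/6)) = (√3/2, 1/2), where f = 2√(2−√3). -/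
theorem stmt18 (x y : ℝ) (hcirc : x ^ 2 + y ^ 2 = 1)
    (hx : 1 / 2 ≤ x) (hx1 : x ≤ 1) (hy : 0 ≤ y) (hy1 : y ≤ Real.sqrt 3 / 2) :
    Real.sqrt ((x - 1 / 2) ^ 2 + (y - Real.sqrt 3 / 2) ^ 2) +
        Real.sqrt ((x - 1) ^ 2 + y ^ 2) ≤ 2 * Real.sqrt (2 - Real.sqrt 3) ∧
      (Real.sqrt ((x - 1 / 2) ^ 2 + (y - Real.sqrt 3 / 2) ^ 2) +
          Real.sqrt ((x - 1) ^ 2 + y ^ 2) = 2 * Real.sqrt (2 - Real.sqrt 3) ↔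
        (x, y) = (Real.sqrt 3 / 2, 1 / 2)) := by
  set s := Real.sqrt 3 with hsdef
  have hs : s ^ 2 = 3 := Real.sq_sqrt (by norm_num)
  have hs0 : 0 ≤ s := Real.sqrt_nonneg 3
  have hs2 : s < 2 := by nlinarith [hs, hs0]
  have hs1 : 1 ≤ s := by nlinarith [hs, hs0]
  set u := Real.sqrt ((x - 1 / 2) ^ 2 + (y - s / 2) ^ 2) with hudef
  set v := Real.sqrt ((x - 1) ^ 2 + y ^ 2) with hvdef
  have hu0 : 0 ≤ u := Real.sqrt_nonneg _
  have hv0 : 0 ≤ v := Real.sqrt_nonneg _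
  have hA : (x - 1 / 2) ^ 2 + (y - s / 2) ^ 2 = 2 - x - s * y := by
    linear_combination hcirc + hs / 4
  have hB : (x - 1) ^ 2 + y ^ 2 = 2 - 2 * x := by linear_combination hcirc
  have hA0 : 0 ≤ (x - 1 / 2) ^ 2 + (y - s / 2) ^ 2 := by positivity
  have hB0 : 0 ≤ (x - 1) ^ 2 + y ^ 2 := by positivity
  have hu2 : u ^ 2 = 2 - x - s * y := by rw [hudef, Real.sq_sqrt hA0, hA]
  have hv2 : v ^ 2 = 2 - 2 * x := by rw [hvdef, Real.sq_sqrt hB0, hB]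
  -- sx - y ≥ 0
  have hsxy : 0 ≤ s * x - y := by
    have h1 : s * (1 / 2) ≤ s * x := mul_le_mul_of_nonneg_left hx hs0
    linarith
  have htnn : 0 ≤ s * x + y := by
    have h1 : s * (1 / 2) ≤ s * x := mul_le_mul_of_nonneg_left hx hs0
    linarith
  -- sx + y ≥ s
  have hid : (s * x + y) ^ 2 = s ^ 2 + 2 * y * (s * x - y) := by
    linear_combination (x ^ 2 - 1) * hs + 3 * hcirc
  have h2 : s ^ 2 ≤ (s * x + y) ^ 2 := by
    have h3 := mul_nonneg hy hsxy
    linarith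
  have hts : s ≤ s * x + y :=
    calc s = Real.sqrt (s ^ 2) := (Real.sqrt_sq hs0).symm
      _ ≤ Real.sqrt ((s * x + y) ^ 2) := Real.sqrt_le_sqrt h2
      _ = s * x + y := Real.sqrt_sq htnn
  -- product of the two distances
  have huv : u * v = s * x + y - s := by
    rw [hudef, hvdef, ← Real.sqrt_mul hA0, hA, hB]
    rw [show (2 - x - s * y) * (2 - 2 * x) = (s * x + y - s) ^ 2 by
      linear_combination (-(x - 1) ^ 2) * hs - hcirc]
    exact Real.sqrt_sq (by linarith)
  -- sx + y ≤ 2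
  have hid2 : (s * x + y) ^ 2 + (x - s * y) ^ 2 = 4 := by
    linear_combination (x ^ 2 + y ^ 2) * hs + 4 * hcirc
  have ht2 : s * x + y ≤ 2 := by
    have h4 : (s * x + y) ^ 2 ≤ 2 ^ 2 := by
      have := sq_nonneg (x - s * y); linarith
    calc s * x + y = Real.sqrt ((s * x + y) ^ 2) := (Real.sqrt_sq htnn).symm
      _ ≤ Real.sqrt (2 ^ 2) := Real.sqrt_le_sqrt h4
      _ = 2 := Real.sqrt_sq (by norm_num)
  have hsum2 : (u + v) ^ 2 = u ^ 2 + v ^ 2 + 2 * (u * v) := by ring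
  rw [hu2, hv2, huv] at hsum2
  have hkey : 4 * (2 - s) - (u + v) ^ 2 = (2 - s) * (2 - (s * x + y)) := by
    rw [hsum2]; linear_combination (-x) * hs
  have h2s0 : (0 : ℝ) ≤ 2 - s := by linarith
  have hsq4 : Real.sqrt (4 * (2 - s)) = 2 * Real.sqrt (2 - s) := by
    rw [show (4 : ℝ) * (2 - s) = 2 ^ 2 * (2 - s) by ring,
      Real.sqrt_mul (by positivity), Real.sqrt_sq (by norm_num)]
  have hle : u + v ≤ 2 * Real.sqrt (2 - s) := by
    have h5 : (u + v) ^ 2 ≤ 4 * (2 - s) := by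
      have h6 : 0 ≤ (2 - s) * (2 - (s * x + y)) :=
        mul_nonneg h2s0 (by linarith)
      linarith
    calc u + v = Real.sqrt ((u + v) ^ 2) := (Real.sqrt_sq (by linarith)).symm
      _ ≤ Real.sqrt (4 * (2 - s)) := Real.sqrt_le_sqrt h5
      _ = 2 * Real.sqrt (2 - s) := hsq4
  refine ⟨hle, ?_, ?_⟩
  · intro heq
    have h7 : (u + v) ^ 2 = 4 * (2 - s) := by
      rw [heq, show (2 * Real.sqrt (2 - s)) ^ 2
        = 4 * Real.sqrt (2 - s) ^ 2 by ring, Real.sq_sqrt h2s0]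
    have h8 : (2 - s) * (2 - (s * x + y)) = 0 := by linarith
    have ht : s * x + y = 2 := by
      rcases mul_eq_zero.mp h8 with h | h
      · exfalso; linarith
      · linarith
    have h9 : (x - s * y) ^ 2 = 0 := by rw [ht] at hid2; linarith
    have hxy : x = s * y := by
      have := pow_eq_zero_iff (n := 2) (by norm_num) |>.mp h9
      linarith
    have h10 : x ^ 2 = s ^ 2 * y ^ 2 := by rw [hxy]; ring
    have hyy : 4 * y ^ 2 = 1 := by
      linear_combination hcirc - h10 - y ^ 2 * hs
    have h11 : (2 * y - 1) * (2 * y + 1) = 0 := by linear_combination hyy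
    have hy2 : y = 1 / 2 := by
      rcases mul_eq_zero.mp h11 with h | h
      · linarith
      · linarith
    have hx2 : x = s / 2 := by rw [hxy, hy2]; ring
    rw [Prod.ext_iff]
    exact ⟨hx2, hy2⟩
  · intro heq
    rw [Prod.ext_iff] at heq
    obtain ⟨hx2, hy2⟩ := heq
    simp only at hx2 hy2
    have hu2' : u ^ 2 = 2 - s := by rw [hu2, hx2, hy2]; ring
    have hv2' : v ^ 2 = 2 - s := by rw [hv2, hx2]; ring
    have hu' : u = Real.sqrt (2 - s) := by rw [← hu2', Real.sqrt_sq hu0]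
    have hv' : v = Real.sqrt (2 - s) := by rw [← hv2', Real.sqrt_sq hv0]
    rw [hu', hv']; ring
end
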